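/- Every positive self-adjoint operator A on a quaternionic Hilbert space has spherical spectrum contained in [0, +∞). -/

import Mathlib

noncomputable section

notation "ℍ" => Quaternion ℝ

open MeasureTheory Filter

/-- Borel σ-algebra on the quaternions. -/
instance : MeasurableSpace ℍ := borel ℍ

instance : BorelSpace ℍ := ⟨rfl⟩

/-- A quaternionic (right) Hilbert space structure on a normed additive group `H`:
a right scalar multiplication by quaternions together with an ℍ-valued Hermitian
scalar product compatible with the norm.  (Completeness of `H` is assumed
separately via `[CompleteSpace H]`.) -/
structure QHS (H : Type) [NormedAddCommGroup H] where
  smul : H → ℍ → H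
  inn : H → H → ℍ
  add_smul' : ∀ (u v : H) (q : ℍ), smul (u + v) q = smul u q + smul v q
  smul_add' : ∀ (u : H) (p q : ℍ), smul u (p + q) = smul u p + smul u q
  smul_mul' : ∀ (u : H) (p q : ℍ), smul u (p * q) = smul (smul u p) q
  smul_one' : ∀ u : H, smul u 1 = u
  inn_add_right : ∀ u v w : H, inn u (v + w) = inn u v + inn u w
  inn_smul_right : ∀ (u v : H) (q : ℍ), inn u (smul v q) = inn u v * q
  inn_conj : ∀ u v : H, inn u v = star (inn v u)
  inn_self_real : ∀ u : H, inn u u = (((inn u u).re : ℝ) : ℍ)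
  norm_sq' : ∀ u : H, ‖u‖ ^ 2 = (inn u u).re

variable {H : Type} [NormedAddCommGroup H]

/-- The graph of an operator `T` with domain `D`. -/
def graphOf (T : H → H) (D : Set H) : Set (H × H) := {p | p.1 ∈ D ∧ p.2 = T p.1}

/-- Domain of a graph. -/
def graphDom (G : Set (H × H)) : Set H := {u | ∃ w, (u, w) ∈ G}

/-- A function extracted from a graph (by choice). -/
def graphFun (G : Set (H × H)) : H → H := fun u =>
  letI : Nonempty H := ⟨0⟩
  Classical.epsilon fun w => (u, w) ∈ G

/-- Boundedness of an everywhere defined operator. -/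
def BoundedOp (T : H → H) : Prop := ∃ C : ℝ, ∀ u : H, ‖T u‖ ≤ C * ‖u‖

/-- The operator norm. -/
def opNorm (T : H → H) : ℝ := sInf {C : ℝ | 0 ≤ C ∧ ∀ u : H, ‖T u‖ ≤ C * ‖u‖}

/-- Closed operator: the graph is closed. -/
def ClosedOp (T : H → H) (D : Set H) : Prop := IsClosed (graphOf T D)

/-- The domain `D(T²)`. -/
def D2 (T : H → H) (D : Set H) : Set H := {u ∈ D | T u ∈ D}

/-- The slice complex plane `ℂ_ι = {a + ι b}` determined by an imaginary unit `ι`. -/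
def Cslice (ι : ℍ) : Set ℍ :=
  {x : ℍ | ∃ a b : ℝ, x = ((a : ℝ) : ℍ) + ι * ((b : ℝ) : ℍ)}

/-- The closed upper half slice plane `ℂ_ι⁺ = {a + ι b : b ≥ 0}`. -/
def Cplus (ι : ℍ) : Set ℍ :=
  {x : ℍ | ∃ a b : ℝ, 0 ≤ b ∧ x = ((a : ℝ) : ℍ) + ι * ((b : ℝ) : ℍ)}

namespace QHS

variable (𝒮 : QHS H)

/-- Right ℍ-linearity of an everywhere defined map. -/
def RightLinear (T : H → H) : Prop :=
  (∀ u v : H, T (u + v) = T u + T v) ∧ ∀ (u : H) (q : ℍ), T (𝒮.smul u q) = 𝒮.smul (T u) q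

/-- A (right ℍ-linear) subspace. -/
def IsSubspace (D : Set H) : Prop :=
  (0 : H) ∈ D ∧ (∀ u ∈ D, ∀ v ∈ D, u + v ∈ D) ∧ ∀ u ∈ D, ∀ q : ℍ, 𝒮.smul u q ∈ D

/-- Right ℍ-linearity on a domain `D`. -/
def RightLinearOn (T : H → H) (D : Set H) : Prop :=
  (∀ u ∈ D, ∀ v ∈ D, T (u + v) = T u + T v) ∧
    ∀ u ∈ D, ∀ q : ℍ, T (𝒮.smul u q) = 𝒮.smul (T u) q

/-- `S` is the adjoint of `T` (both everywhere defined):  `⟨S u|v⟩ = ⟨u|T v⟩`. -/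
def AdjointPair (T S : H → H) : Prop := ∀ u v : H, 𝒮.inn (S u) v = 𝒮.inn u (T v)

def SelfAdjointOp (T : H → H) : Prop := ∀ u v : H, 𝒮.inn (T u) v = 𝒮.inn u (T v)

def AntiSelfAdjointOp (T : H → H) : Prop := ∀ u v : H, 𝒮.inn (T u) v = -𝒮.inn u (T v)

/-- Positivity: `⟨u|T u⟩` is real and non-negative. -/
def PositiveOp (T : H → H) : Prop :=
  ∀ u : H, 𝒮.inn u (T u) = ((((𝒮.inn u (T u)).re : ℝ)) : ℍ) ∧ 0 ≤ (𝒮.inn u (T u)).re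

/-- Positivity on a domain. -/
def PositiveOn (T : H → H) (D : Set H) : Prop :=
  ∀ u ∈ D, 𝒮.inn u (T u) = ((((𝒮.inn u (T u)).re : ℝ)) : ℍ) ∧ 0 ≤ (𝒮.inn u (T u)).re

/-- Unitarity: right linear, surjective, inner-product preserving. -/
def UnitaryOp (T : H → H) : Prop :=
  𝒮.RightLinear T ∧ Function.Surjective T ∧ ∀ u v : H, 𝒮.inn (T u) (T v) = 𝒮.inn u v

/-- The domain of the adjoint of `T : D → H`. -/
def adjDom (T : H → H) (D : Set H) : Set H :=
  {u : H | ∃ w : H, ∀ v ∈ D, 𝒮.inn w v = 𝒮.inn u (T v)}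

/-- The adjoint operator of `T : D → H` (defined by choice; it is the genuine
adjoint when `D` is dense). -/
def adjOp (T : H → H) (D : Set H) : H → H := fun u =>
  letI := Classical.propDecidable
  if h : ∃ w : H, ∀ v ∈ D, 𝒮.inn w v = 𝒮.inn u (T v) then h.choose else 0

/-- Self-adjointness of an unbounded operator: `T* = T` (same domain, same values). -/
def SelfAdjointUnb (T : H → H) (D : Set H) : Prop :=
  𝒮.adjDom T D = D ∧ ∀ u ∈ D, 𝒮.adjOp T D u = T u

/-- Normality of an unbounded operator: `T T* = T* T`. -/
def NormalUnb (T : H → H) (D : Set H) : Prop :=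
  ({u ∈ D | T u ∈ 𝒮.adjDom T D} = {u ∈ 𝒮.adjDom T D | 𝒮.adjOp T D u ∈ D}) ∧
    ∀ u ∈ D, T u ∈ 𝒮.adjDom T D → 𝒮.adjOp T D (T u) = T (𝒮.adjOp T D u)

/-- The positive square root of a positive bounded operator (by choice). -/
def posSqrt (T : H → H) : H → H :=
  letI : Nonempty (H → H) := ⟨id⟩
  Classical.epsilon fun R : H → H =>
    𝒮.RightLinear R ∧ BoundedOp R ∧ 𝒮.PositiveOp R ∧ 𝒮.SelfAdjointOp R ∧
      ∀ u : H, R (R u) = T u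

/-- The operator `Δ_q(T) = T² - T (2 Re q) + |q|² 1`. -/
def Delta (T : H → H) (q : ℍ) : H → H := fun u =>
  T (T u) - 𝒮.smul (T u) (((2 * q.re : ℝ)) : ℍ) + 𝒮.smul u (((‖q‖ ^ 2 : ℝ)) : ℍ)

/-- Membership in the spherical resolvent set: `Δ_q(T)` is injective with dense range
and bounded inverse. -/
def InSphResolvent (T : H → H) (D : Set H) (q : ℍ) : Prop :=
  (∀ u ∈ D2 T D, 𝒮.Delta T q u = 0 → u = 0) ∧
    Dense (𝒮.Delta T q '' D2 T D) ∧
    ∃ C : ℝ, ∀ u ∈ D2 T D, ‖u‖ ≤ C * ‖𝒮.Delta T q u‖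

/-- The spherical spectrum. -/
def sphSpectrum (T : H → H) (D : Set H) : Set ℍ := {q | ¬𝒮.InSphResolvent T D q}

/-- The spherical point spectrum. -/
def sphPointSpectrum (T : H → H) (D : Set H) : Set ℍ :=
  {q | ∃ u ∈ D2 T D, u ≠ 0 ∧ 𝒮.Delta T q u = 0}

/-- The spherical residual spectrum. -/
def sphResidualSpectrum (T : H → H) (D : Set H) : Set ℍ :=
  {q | (∀ u ∈ D2 T D, 𝒮.Delta T q u = 0 → u = 0) ∧
    ¬Dense (𝒮.Delta T q '' D2 T D)}

/-- The spherical continuous spectrum. -/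
def sphContinuousSpectrum (T : H → H) (D : Set H) : Set ℍ :=
  {q | (∀ u ∈ D2 T D, 𝒮.Delta T q u = 0 → u = 0) ∧
    Dense (𝒮.Delta T q '' D2 T D) ∧
    ¬∃ C : ℝ, ∀ u ∈ D2 T D, ‖u‖ ≤ C * ‖𝒮.Delta T q u‖}

/-- A Hilbert basis of a quaternionic Hilbert space. -/
def IsHilbertBasis (N : Set H) : Prop :=
  (∀ z ∈ N, ‖z‖ = 1) ∧ (∀ z ∈ N, ∀ w ∈ N, z ≠ w → 𝒮.inn z w = 0) ∧
    ∀ u : H, (∀ z ∈ N, 𝒮.inn z u = 0) → u = 0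

/-- `L` is the left scalar multiplication induced by the Hilbert basis `N`:
`L_q u = Σ_{z ∈ N} z q ⟨z|u⟩`. -/
def IsInducedLSM (N : Set H) (L : ℍ → H → H) : Prop :=
  ∀ (q : ℍ) (u : H),
    HasSum (fun z : N => 𝒮.smul (z : H) (q * 𝒮.inn (z : H) u)) (L q u)

/-- `L` is a left scalar multiplication of `H` (induced by some Hilbert basis). -/
def IsLSM (L : ℍ → H → H) : Prop :=
  ∃ N : Set H, 𝒮.IsHilbertBasis N ∧ 𝒮.IsInducedLSM N L

/-- The orthogonal complement of a subset. -/
def orthC (S : Set H) : Set H := {u : H | ∀ v ∈ S, 𝒮.inn u v = 0}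

/-- The complex subspace `H₊^{Jι} = {u : J u = u ι}`. -/
def Hplus (J : H → H) (ι : ℍ) : Set H := {u : H | J u = 𝒮.smul u ι}

/-- The complex subspace `H₋^{Jι} = {u : J u = -u ι}`. -/
def Hminus (J : H → H) (ι : ℍ) : Set H := {u : H | J u = -𝒮.smul u ι}

end QHS

/-- A quaternionic projection valued measure (qPVM) over `ℂ_ι⁺` in `H`. -/
structure IsQPVM (𝒮 : QHS H) (ι : ℍ) (P : Set ℍ → H → H) : Prop where
  proj_linear : ∀ E : Set ℍ, MeasurableSet E → E ⊆ Cplus ι → 𝒮.RightLinear (P E)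
  proj_bounded : ∀ E : Set ℍ, MeasurableSet E → E ⊆ Cplus ι → BoundedOp (P E)
  proj_idem : ∀ E : Set ℍ, MeasurableSet E → E ⊆ Cplus ι → ∀ u, P E (P E u) = P E u
  proj_sa : ∀ E : Set ℍ, MeasurableSet E → E ⊆ Cplus ι → 𝒮.SelfAdjointOp (P E)
  proj_pos : ∀ E : Set ℍ, MeasurableSet E → E ⊆ Cplus ι → 𝒮.PositiveOp (P E)
  total : ∀ u : H, P (Cplus ι) u = u
  inter : ∀ E F : Set ℍ, MeasurableSet E → E ⊆ Cplus ι → MeasurableSet F → F ⊆ Cplus ι →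
    ∀ u, P (E ∩ F) u = P E (P F u)
  sigma_add : ∀ E : ℕ → Set ℍ, (∀ n, MeasurableSet (E n) ∧ E n ⊆ Cplus ι) →
    (Pairwise fun n m => Disjoint (E n) (E m)) →
    ∀ u : H, HasSum (fun n => P (E n) u) (P (⋃ n, E n) u)

/-- The support of a qPVM: points of `ℂ_ι⁺` all of whose relatively open neighbourhoods
have non-zero projection. -/
def suppP (ι : ℍ) (P : Set ℍ → H → H) : Set ℍ :=
  {x ∈ Cplus ι | ∀ U : Set ℍ, IsOpen U → x ∈ U → ∃ u : H, P (U ∩ Cplus ι) u ≠ 0}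

/-- An intertwining quaternionic PVM (iqPVM): a qPVM together with a commuting left
scalar multiplication. -/
def IsIQPVM (𝒮 : QHS H) (ι : ℍ) (P : Set ℍ → H → H) (L : ℍ → H → H) : Prop :=
  IsQPVM 𝒮 ι P ∧ 𝒮.IsLSM L ∧
    ∀ E : Set ℍ, MeasurableSet E → E ⊆ Cplus ι →
      ∀ (q : ℍ) (u : H), P E (L q u) = L q (P E u)

/-- Data of a simple function: coefficients and pairwise disjoint Borel subsets of `ℂ_ι⁺`. -/
def IsSimpleData (ι : ℍ) {n : ℕ} (c : Fin n → ℍ) (E : Fin n → Set ℍ) : Prop :=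
  (∀ ℓ, MeasurableSet (E ℓ) ∧ E ℓ ⊆ Cplus ι) ∧
    Pairwise fun ℓ ℓ' => Disjoint (E ℓ) (E ℓ')

/-- `S = ∫ φ d𝒫`, characterized by uniform approximation (on the support of `P`)
by simple functions together with approximation of `S` by the corresponding
elementary integrals `Σ_ℓ L_{c_ℓ} P(E_ℓ)`. -/
def IsBoundedIntegral (𝒮 : QHS H) (ι : ℍ) (P : Set ℍ → H → H) (L : ℍ → H → H)
    (φ : ℍ → ℍ) (S : H → H) : Prop :=
  ∀ ε : ℝ, 0 < ε → ∃ (n : ℕ) (c : Fin n → ℍ) (E : Fin n → Set ℍ),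
    IsSimpleData ι c E ∧
    (∀ x ∈ suppP ι P, ‖φ x - ∑ ℓ, Set.indicator (E ℓ) (fun _ => c ℓ) x‖ ≤ ε) ∧
    ∀ u : H, ‖S u - ∑ ℓ, L (c ℓ) (P (E ℓ) u)‖ ≤ ε * ‖u‖

/-- The integral of a bounded measurable function with respect to an iqPVM
(defined by choice from the characterizing property). -/
def bInt (𝒮 : QHS H) (ι : ℍ) (P : Set ℍ → H → H) (L : ℍ → H → H) (φ : ℍ → ℍ) : H → H :=
  letI : Nonempty (H → H) := ⟨id⟩
  Classical.epsilon fun S : H → H => IsBoundedIntegral 𝒮 ι P L φ S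

/-- The `P`-essential supremum norm `‖φ‖_∞^{(P)}`. -/
def essSupNorm (ι : ℍ) (P : Set ℍ → H → H) (φ : ℍ → ℍ) : ℝ :=
  sInf {k : ℝ | 0 ≤ k ∧ ∀ u : H, P {x ∈ Cplus ι | k < ‖φ x‖} u = 0}

/-- `μ` is the positive Borel measure `μ_u^{(P)} : E ↦ ⟨u|P(E)u⟩`. -/
def muMatches (𝒮 : QHS H) (ι : ℍ) (P : Set ℍ → H → H) (u : H) (μ : Measure ℍ) : Prop :=
  ∀ E : Set ℍ, MeasurableSet E →
    μ E = ENNReal.ofReal ((𝒮.inn u (P (E ∩ Cplus ι) u)).re)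

/-- The natural domain `D_f = {u : f ∈ L²(μ_u^{(P)})}` of `∫ f d𝒫`. -/
def Dnat (𝒮 : QHS H) (ι : ℍ) (P : Set ℍ → H → H) (f : ℍ → ℍ) : Set H :=
  {u : H | ∃ μ : Measure ℍ, muMatches 𝒮 ι P u μ ∧
    (∫⁻ x, ENNReal.ofReal (‖f x‖ ^ 2) ∂μ) < ⊤}

/-- The truncation of `f` at level `n`. -/
def trunc (f : ℍ → ℍ) (n : ℕ) : ℍ → ℍ := fun x => if ‖f x‖ ≤ (n : ℝ) then f x else 0

/-- The integral of a possibly unbounded measurable function with respect to an iqPVM: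
the strong limit of the integrals of its truncations. -/
def uInt (𝒮 : QHS H) (ι : ℍ) (P : Set ℍ → H → H) (L : ℍ → H → H) (f : ℍ → ℍ) : H → H :=
  fun u =>
    letI : Nonempty H := ⟨0⟩
    limUnder atTop fun n : ℕ => bInt 𝒮 ι P L (trunc f n) u

/-- The inverse `(1 + T*T)⁻¹` of `1 + T*T` (by choice). -/
def CT (𝒮 : QHS H) (T : H → H) (D : Set H) : H → H :=
  letI : Nonempty (H → H) := ⟨id⟩
  Classical.epsilon fun C : H → H =>
    (∀ y : H, C y ∈ D ∧ T (C y) ∈ 𝒮.adjDom T D ∧ C y + 𝒮.adjOp T D (T (C y)) = y) ∧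
      ∀ u ∈ D, T u ∈ 𝒮.adjDom T D → C (u + 𝒮.adjOp T D (T u)) = u

/-- The bounded transform `Z_T = T (1 + T*T)^{-1/2}`. -/
def ZT (𝒮 : QHS H) (T : H → H) (D : Set H) : H → H := fun u =>
  T (𝒮.posSqrt (CT 𝒮 T D) u)

end

/-!
Write `a = Re q` and `b² = |q|² - a²`. On `D(A²)` we have `Δ_q(A) = (A - a)² + b²`, so
`Re ⟨u|Δ_q(A) u⟩ = ‖(A - a) u‖² + b² ‖u‖²`, and positivity of `A` gives
`‖(A - a) u‖ ≥ -a ‖u‖`. Unless `b = 0` and `a ≥ 0`, i.e. unless `q ∈ [0, +∞)`, this makes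
`Δ_q(A)` coercive, hence injective with bounded inverse. For the density of its range,
`Δ_q(A) + ε = (A - a)² + (b² + ε)` is onto for every `ε > 0` by von Neumann's argument
(orthogonal projection onto the closed graph of the self-adjoint operator
`(A - a) / √(b² + ε)` in `H ⊕ H`), and coercivity bounds these solutions uniformly in `ε`.
-/

lemma Quaternion.eq_of_forall_re_mul_eq {a b : ℍ} (h : ∀ p : ℍ, (a * p).re = (b * p).re) :
    a = b := by
  have h0 := h (star (a - b))
  rw [← sub_eq_zero, ← Quaternion.re_sub, ← sub_mul, Quaternion.self_mul_star,
    Quaternion.re_coe, Quaternion.normSq_eq_zero] at h0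
  exact sub_eq_zero.mp h0

lemma Quaternion.sq_norm_sub_sq_re (q : ℍ) : ‖q‖ ^ 2 - q.re ^ 2 = ‖q.im‖ ^ 2 := by
  simp only [sq, ← Quaternion.normSq_eq_norm_mul_self, Quaternion.normSq_def',
    Quaternion.re_im, Quaternion.imI_im, Quaternion.imJ_im, Quaternion.imK_im]
  ring

section

variable {H : Type} [NormedAddCommGroup H]

namespace QHS

section

variable (𝒮 : QHS H)

def smulAddHom (q : ℍ) : H →+ H := AddMonoidHom.mk' (𝒮.smul · q) fun u v => 𝒮.add_smul' u v q

def smulScalarAddHom (u : H) : ℍ →+ H := AddMonoidHom.mk' (𝒮.smul u) (𝒮.smul_add' u)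

def innAddHom (u : H) : H →+ ℍ := AddMonoidHom.mk' (𝒮.inn u) (𝒮.inn_add_right u)

protected lemma smul_neg_one (u : H) : 𝒮.smul u (-1) = -u :=
  (map_neg (𝒮.smulScalarAddHom u) 1).trans (congrArg Neg.neg (𝒮.smul_one' u))

protected lemma sub_smul (u v : H) (q : ℍ) : 𝒮.smul (u - v) q = 𝒮.smul u q - 𝒮.smul v q :=
  map_sub (𝒮.smulAddHom q) u v

lemma smul_smul_real (u : H) (r s : ℝ) :
    𝒮.smul (𝒮.smul u (r : ℍ)) (s : ℍ) = 𝒮.smul u ((r * s : ℝ) : ℍ) := by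
  rw [← 𝒮.smul_mul', Quaternion.coe_mul]

lemma smul_real_comm (u : H) (r : ℝ) (p : ℍ) :
    𝒮.smul (𝒮.smul u p) (r : ℍ) = 𝒮.smul (𝒮.smul u (r : ℍ)) p := by
  rw [← 𝒮.smul_mul', ← 𝒮.smul_mul', Quaternion.coe_commutes]

lemma inn_zero_right (u : H) : 𝒮.inn u 0 = 0 := map_zero (𝒮.innAddHom u)

lemma inn_zero_left (u : H) : 𝒮.inn 0 u = 0 := by
  rw [𝒮.inn_conj, 𝒮.inn_zero_right, star_zero]

lemma inn_sub_right (u v w : H) : 𝒮.inn u (v - w) = 𝒮.inn u v - 𝒮.inn u w :=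
  map_sub (𝒮.innAddHom u) v w

lemma inn_add_left (u v w : H) : 𝒮.inn (u + v) w = 𝒮.inn u w + 𝒮.inn v w := by
  rw [𝒮.inn_conj, 𝒮.inn_add_right, star_add, ← 𝒮.inn_conj, ← 𝒮.inn_conj]

lemma inn_sub_left (u v w : H) : 𝒮.inn (u - v) w = 𝒮.inn u w - 𝒮.inn v w := by
  rw [𝒮.inn_conj, 𝒮.inn_sub_right, star_sub, ← 𝒮.inn_conj, ← 𝒮.inn_conj]

lemma inn_smul_left (u v : H) (q : ℍ) : 𝒮.inn (𝒮.smul u q) v = star q * 𝒮.inn u v := by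
  rw [𝒮.inn_conj, 𝒮.inn_smul_right, star_mul, ← 𝒮.inn_conj]

lemma inn_smul_real_left (u v : H) (r : ℝ) :
    𝒮.inn (𝒮.smul u (r : ℍ)) v = 𝒮.inn u v * (r : ℍ) := by
  rw [𝒮.inn_smul_left, Quaternion.star_coe, Quaternion.coe_commutes]

lemma re_inn_smul_real_right (u v : H) (r : ℝ) :
    (𝒮.inn u (𝒮.smul v (r : ℍ))).re = r * (𝒮.inn u v).re := by
  rw [𝒮.inn_smul_right, Quaternion.mul_coe_eq_smul, Quaternion.re_smul, smul_eq_mul]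

lemma norm_smul (u : H) (q : ℍ) : ‖𝒮.smul u q‖ = ‖u‖ * ‖q‖ := by
  have hsq : ‖𝒮.smul u q‖ ^ 2 = (‖u‖ * ‖q‖) ^ 2 := by
    rw [𝒮.norm_sq', 𝒮.inn_smul_left, 𝒮.inn_smul_right, 𝒮.inn_self_real, ← 𝒮.norm_sq',
      ← mul_assoc, ← Quaternion.coe_commutes, mul_assoc, Quaternion.star_mul_self,
      ← Quaternion.coe_mul, Quaternion.re_coe, Quaternion.normSq_eq_norm_mul_self]
    ring
  exact (pow_left_inj₀ (norm_nonneg _) (by positivity) two_ne_zero).mp hsq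

/-- `H` as a real inner product space: real scalars act by right multiplication and the
inner product is `Re ⟨u|v⟩`. -/
def RealSpace (_ : QHS H) : Type := H

instance : NormedAddCommGroup 𝒮.RealSpace := inferInstanceAs (NormedAddCommGroup H)

instance [CompleteSpace H] : CompleteSpace 𝒮.RealSpace := inferInstanceAs (CompleteSpace H)

instance : SMul ℝ 𝒮.RealSpace := ⟨fun r u => 𝒮.smul u (r : ℍ)⟩

instance : Module ℝ 𝒮.RealSpace :=
  Module.ofMinimalAxioms (fun r u v => 𝒮.add_smul' u v (r : ℍ))
    (fun r s (u : H) => by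
      change 𝒮.smul u ((r + s : ℝ) : ℍ) = _
      rw [Quaternion.coe_add, 𝒮.smul_add']; rfl)
    (fun r s (u : H) => by
      change 𝒮.smul u ((r * s : ℝ) : ℍ) = _
      rw [mul_comm, ← 𝒮.smul_smul_real]; rfl)
    (fun (u : H) => by
      change 𝒮.smul u ((1 : ℝ) : ℍ) = u
      rw [Quaternion.coe_one, 𝒮.smul_one'])

instance : NormedSpace ℝ 𝒮.RealSpace :=
  ⟨fun r (u : H) => by
    change ‖𝒮.smul u (r : ℍ)‖ ≤ ‖r‖ * ‖(u : H)‖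
    rw [𝒮.norm_smul, Quaternion.norm_coe, mul_comm]⟩

instance : InnerProductSpace ℝ 𝒮.RealSpace where
  inner u v := (𝒮.inn u v).re
  norm_sq_eq_re_inner u := 𝒮.norm_sq' u
  conj_inner_symm u v := by
    change (𝒮.inn v u).re = (𝒮.inn u v).re
    rw [𝒮.inn_conj u v, Quaternion.re_star]
  add_left u v w := congrArg (fun q : ℍ => q.re) (𝒮.inn_add_left u v w)
  smul_left (u v : H) r := by
    change (𝒮.inn (𝒮.smul u (r : ℍ)) v).re = r * (𝒮.inn u v).re
    rw [𝒮.inn_smul_real_left, Quaternion.mul_coe_eq_smul, Quaternion.re_smul, smul_eq_mul]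

lemma re_inn_le (u v : H) : (𝒮.inn u v).re ≤ ‖u‖ * ‖v‖ :=
  real_inner_le_norm (F := 𝒮.RealSpace) u v

def realAdjointGraph (T : 𝒮.RealSpace → 𝒮.RealSpace) (D : Set 𝒮.RealSpace) :
    Submodule ℝ (WithLp 2 (𝒮.RealSpace × 𝒮.RealSpace)) where
  carrier := {p | ∀ v ∈ D, inner ℝ p.snd v = inner ℝ p.fst (T v)}
  add_mem' hp hq v hv := by
    simp only [WithLp.add_fst, WithLp.add_snd, inner_add_left, hp v hv, hq v hv]
  zero_mem' v _ := by simp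
  smul_mem' r p hp v hv := by
    simp only [WithLp.smul_fst, WithLp.smul_snd, inner_smul_left, hp v hv]

lemma isClosed_realAdjointGraph (T : 𝒮.RealSpace → 𝒮.RealSpace) (D : Set 𝒮.RealSpace) :
    IsClosed (𝒮.realAdjointGraph T D : Set (WithLp 2 (𝒮.RealSpace × 𝒮.RealSpace))) := by
  have hG : (𝒮.realAdjointGraph T D : Set (WithLp 2 (𝒮.RealSpace × 𝒮.RealSpace))) =
      ⋂ v ∈ D, {p | inner ℝ p.snd v = inner ℝ p.fst (T v)} := by
    ext p
    simp [realAdjointGraph]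
  rw [hG]
  exact isClosed_biInter fun v _ => isClosed_eq
    ((WithLp.continuous_snd 2 _ _).inner continuous_const)
    ((WithLp.continuous_fst 2 _ _).inner continuous_const)

/-- A choice-free form of `SelfAdjointUnb` (for dense `D`), convenient to transport along
real shifts and rescalings of `T`. -/
structure IsSelfAdjointOn (T : H → H) (D : Set H) : Prop where
  symm : ∀ u ∈ D, ∀ v ∈ D, 𝒮.inn (T u) v = 𝒮.inn u (T v)
  maximal : ∀ x z : H, (∀ v ∈ D, 𝒮.inn z v = 𝒮.inn x (T v)) → x ∈ D ∧ T x = z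

def shift (T : H → H) (a : ℝ) : H → H := fun u => T u - 𝒮.smul u (a : ℍ)

lemma mul_norm_le_of_le_re_inn {δ : ℝ} {u w : H}
    (h : δ * ‖u‖ ^ 2 ≤ (𝒮.inn u w).re) : δ * ‖u‖ ≤ ‖w‖ := by
  rcases (norm_nonneg u).eq_or_lt with hu | hu
  · rw [← hu, mul_zero]
    exact norm_nonneg w
  · refine le_of_mul_le_mul_left ?_ hu
    calc ‖u‖ * (δ * ‖u‖) = δ * ‖u‖ ^ 2 := by ring
      _ ≤ (𝒮.inn u w).re := h
      _ ≤ ‖u‖ * ‖w‖ := 𝒮.re_inn_le u w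

theorem dense_image_of_coercive {S : H → H} {E : Set H} {δ : ℝ} (hδ : 0 < δ)
    (hS : ∀ u ∈ E, δ * ‖u‖ ^ 2 ≤ (𝒮.inn u (S u)).re)
    (hsurj : ∀ ε : ℝ, 0 < ε → ∀ z : H, ∃ v ∈ E, S v + 𝒮.smul v (ε : ℍ) = z) :
    Dense (S '' E) := by
  refine Metric.dense_iff.mpr fun z r hr => ?_
  -- solving `S v + v ε = z` gives `‖v‖ ≤ ‖z‖ / δ`, so `S v` is within `ε ‖z‖ / δ` of `z`
  set ε := r * δ / (‖z‖ + 1)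
  have hε : 0 < ε := by positivity
  obtain ⟨v, hv, hvz⟩ := hsurj ε hε z
  have hv_le : δ * ‖v‖ ≤ ‖z‖ := by
    refine 𝒮.mul_norm_le_of_le_re_inn ?_
    rw [← hvz, 𝒮.inn_add_right, Quaternion.re_add, 𝒮.re_inn_smul_real_right, ← 𝒮.norm_sq']
    nlinarith [hS v hv, sq_nonneg ‖v‖]
  refine ⟨S v, ?_, v, hv, rfl⟩
  rw [Metric.mem_ball, dist_eq_norm, ← hvz, sub_add_cancel_left, norm_neg, 𝒮.norm_smul,
    Quaternion.norm_coe, Real.norm_of_nonneg hε.le]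
  have hεz : ε * (‖z‖ + 1) = r * δ := div_mul_cancel₀ _ (by positivity)
  refine lt_of_mul_lt_mul_left ?_ hδ.le
  nlinarith [mul_le_mul_of_nonneg_right hv_le hε.le]

end

section

variable {𝒮 : QHS H} {T : H → H} {D : Set H}

lemma IsSubspace.sub_mem (hD : 𝒮.IsSubspace D) {u v : H} (hu : u ∈ D) (hv : v ∈ D) :
    u - v ∈ D := by
  simpa only [𝒮.smul_neg_one, ← sub_eq_add_neg] using hD.2.1 u hu _ (hD.2.2 v hv (-1))

lemma RightLinearOn.map_sub (hT : 𝒮.RightLinearOn T D) (hD : 𝒮.IsSubspace D) {u v : H}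
    (hu : u ∈ D) (hv : v ∈ D) : T (u - v) = T u - T v := by
  have hneg : T (𝒮.smul v (-1)) = -T v := by rw [hT.2 v hv, 𝒮.smul_neg_one]
  rw [sub_eq_add_neg, ← 𝒮.smul_neg_one, hT.1 u hu _ (hD.2.2 v hv _), hneg, sub_eq_add_neg]

lemma SelfAdjointUnb.isSelfAdjointOn (hT : 𝒮.SelfAdjointUnb T D) (hdense : Dense D) :
    𝒮.IsSelfAdjointOn T D := by
  have adjoint_spec : ∀ x ∈ D, ∀ v ∈ D, 𝒮.inn (T x) v = 𝒮.inn x (T v) := by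
    intro x hx
    have hrep : ∃ w, ∀ v ∈ D, 𝒮.inn w v = 𝒮.inn x (T v) := by
      change x ∈ 𝒮.adjDom T D
      rwa [hT.1]
    rw [← hT.2 x hx, adjOp, dif_pos hrep]
    exact hrep.choose_spec
  refine ⟨adjoint_spec, fun x z h => ?_⟩
  have hx : x ∈ D := by rw [← hT.1]; exact ⟨z, h⟩
  refine ⟨hx, hdense.eq_of_inner_left (E := 𝒮.RealSpace) ℝ fun v hv => ?_⟩
  change (𝒮.inn (T x) v).re = (𝒮.inn z v).re
  rw [adjoint_spec x hx v hv, h v hv]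

lemma IsSelfAdjointOn.maximal_re (hD : 𝒮.IsSubspace D) (hlin : 𝒮.RightLinearOn T D)
    (hT : 𝒮.IsSelfAdjointOn T D) {x z : H}
    (h : ∀ v ∈ D, (𝒮.inn z v).re = (𝒮.inn x (T v)).re) : x ∈ D ∧ T x = z := by
  refine hT.maximal x z fun v hv => Quaternion.eq_of_forall_re_mul_eq fun p => ?_
  rw [← 𝒮.inn_smul_right, ← 𝒮.inn_smul_right, ← hlin.2 v hv, h _ (hD.2.2 v hv p)]

lemma RightLinearOn.shift (hT : 𝒮.RightLinearOn T D) (a : ℝ) :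
    𝒮.RightLinearOn (𝒮.shift T a) D := by
  refine ⟨fun u hu v hv => ?_, fun u hu p => ?_⟩
  · simp only [QHS.shift, hT.1 u hu v hv, 𝒮.add_smul']
    abel
  · simp only [QHS.shift, hT.2 u hu p, 𝒮.smul_real_comm, 𝒮.sub_smul]

lemma IsSelfAdjointOn.shift (hT : 𝒮.IsSelfAdjointOn T D) (a : ℝ) :
    𝒮.IsSelfAdjointOn (𝒮.shift T a) D := by
  refine ⟨fun u hu v hv => ?_, fun x z h => ?_⟩
  · simp only [QHS.shift, 𝒮.inn_sub_left, 𝒮.inn_sub_right, 𝒮.inn_smul_real_left,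
      𝒮.inn_smul_right, hT.symm u hu v hv]
  · have hrep : ∀ v ∈ D, 𝒮.inn (z + 𝒮.smul x (a : ℍ)) v = 𝒮.inn x (T v) := fun v hv => by
      rw [𝒮.inn_add_left, h v hv, QHS.shift, 𝒮.inn_sub_right, 𝒮.inn_smul_real_left,
        𝒮.inn_smul_right, sub_add_cancel]
    obtain ⟨hx, hTx⟩ := hT.maximal x _ hrep
    exact ⟨hx, by rw [QHS.shift, hTx, add_sub_cancel_right]⟩

lemma RightLinearOn.smul_real (hT : 𝒮.RightLinearOn T D) (t : ℝ) :
    𝒮.RightLinearOn (fun u => 𝒮.smul (T u) (t : ℍ)) D :=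
  ⟨fun u hu v hv => by simp only [hT.1 u hu v hv, 𝒮.add_smul'],
    fun u hu p => by simp only [hT.2 u hu p, 𝒮.smul_real_comm]⟩

lemma IsSelfAdjointOn.smul_real (hT : 𝒮.IsSelfAdjointOn T D) {t : ℝ} (ht : t ≠ 0) :
    𝒮.IsSelfAdjointOn (fun u => 𝒮.smul (T u) (t : ℍ)) D := by
  refine ⟨fun u hu v hv => ?_, fun x z h => ?_⟩
  · simp only [𝒮.inn_smul_real_left, 𝒮.inn_smul_right, hT.symm u hu v hv]
  · have hrep : ∀ v ∈ D, 𝒮.inn (𝒮.smul z (t⁻¹ : ℝ)) v = 𝒮.inn x (T v) := fun v hv => by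
      rw [𝒮.inn_smul_real_left, h v hv, 𝒮.inn_smul_right, mul_assoc, ← Quaternion.coe_mul,
        mul_inv_cancel₀ ht, Quaternion.coe_one, mul_one]
    obtain ⟨hx, hTx⟩ := hT.maximal x _ hrep
    refine ⟨hx, ?_⟩
    simp only [hTx, 𝒮.smul_smul_real, inv_mul_cancel₀ ht, Quaternion.coe_one, 𝒮.smul_one']

theorem IsSelfAdjointOn.exists_add_map_map_eq [CompleteSpace H] (hD : 𝒮.IsSubspace D)
    (hlin : 𝒮.RightLinearOn T D) (hT : 𝒮.IsSelfAdjointOn T D) (y : H) :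
    ∃ v ∈ D, T v ∈ D ∧ v + T (T v) = y := by
  -- `(v, T v)` is the orthogonal projection of `(y, 0)` onto the graph of `T`, which is closed
  -- because it is the graph of the adjoint.
  set G := 𝒮.realAdjointGraph T D
  have : CompleteSpace G := (𝒮.isClosed_realAdjointGraph T D).completeSpace_coe
  have graph_mem (u : H) (hu : u ∈ D) :
      (WithLp.toLp 2 (u, T u) : WithLp 2 (𝒮.RealSpace × 𝒮.RealSpace)) ∈ G :=
    fun v hv => congrArg (fun q : ℍ => q.re) (hT.symm u hu v hv)
  let p : WithLp 2 (𝒮.RealSpace × 𝒮.RealSpace) := WithLp.toLp 2 (y, 0)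
  have hg : G.starProjection p ∈ G := G.starProjection_apply_mem p
  have hperp (u : H) (hu : u ∈ D) :=
    G.starProjection_inner_eq_zero p _ (graph_mem u hu)
  generalize G.starProjection p = g at hg hperp
  obtain ⟨hv, hTv⟩ := hT.maximal_re hD hlin hg
  set v : H := g.fst
  have horth : ∀ u ∈ D, (𝒮.inn (y - v) u).re = (𝒮.inn (T v) (T u)).re := by
    intro u hu
    have h0 := hperp u hu
    simp only [WithLp.prod_inner_apply, inner_sub_left,
      WithLp.ofLp_fst, WithLp.ofLp_snd, p, ← hTv] at h0
    change (𝒮.inn y u).re + (𝒮.inn 0 (T u)).re - ((𝒮.inn v u).re + (𝒮.inn (T v) (T u)).re) = 0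
      at h0
    rw [𝒮.inn_zero_left, Quaternion.re_zero] at h0
    rw [𝒮.inn_sub_left, Quaternion.re_sub]
    linarith
  obtain ⟨hTv', hTTv⟩ := hT.maximal_re hD hlin horth
  exact ⟨v, hv, hTv', by rw [hTTv, add_sub_cancel]⟩

theorem IsSelfAdjointOn.exists_map_map_add_smul_eq [CompleteSpace H] (hD : 𝒮.IsSubspace D)
    (hlin : 𝒮.RightLinearOn T D) (hT : 𝒮.IsSelfAdjointOn T D) {c : ℝ} (hc : 0 < c) (z : H) :
    ∃ v ∈ D, T v ∈ D ∧ T (T v) + 𝒮.smul v (c : ℍ) = z := by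
  -- apply `exists_add_map_map_eq` to `T / √c`
  set t : ℝ := (√c)⁻¹
  have ht : t ≠ 0 := inv_ne_zero (Real.sqrt_ne_zero'.mpr hc)
  have htt : t * t = c⁻¹ := by rw [← mul_inv, Real.mul_self_sqrt hc.le]
  obtain ⟨v, hv, hTv, hsum⟩ := (hT.smul_real ht).exists_add_map_map_eq hD (hlin.smul_real t)
    (𝒮.smul z (c⁻¹ : ℝ))
  have hTv' : T v ∈ D := by
    simpa only [𝒮.smul_smul_real, mul_inv_cancel₀ ht, Quaternion.coe_one, 𝒮.smul_one']
      using hD.2.2 _ hTv (t⁻¹ : ℝ)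
  refine ⟨v, hv, hTv', ?_⟩
  rw [hlin.2 _ hTv', 𝒮.smul_smul_real, htt] at hsum
  have := congrArg (𝒮.smul · (c : ℍ)) hsum
  simp only [𝒮.add_smul', 𝒮.smul_smul_real, inv_mul_cancel₀ hc.ne', Quaternion.coe_one,
    𝒮.smul_one'] at this
  rw [← this, add_comm]

end

section

variable {𝒮 : QHS H} {A : H → H} {D : Set H}

lemma shift_mem (hD : 𝒮.IsSubspace D) {u : H} (hu : u ∈ D2 A D) (a : ℝ) :
    𝒮.shift A a u ∈ D :=
  hD.sub_mem hu.2 (hD.2.2 u hu.1 _)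

lemma Delta_eq (hD : 𝒮.IsSubspace D) (hlin : 𝒮.RightLinearOn A D) (q : ℍ) {u : H}
    (hu : u ∈ D2 A D) :
    𝒮.Delta A q u = 𝒮.shift A q.re (𝒮.shift A q.re u) +
      𝒮.smul u ((‖q‖ ^ 2 - q.re ^ 2 : ℝ) : ℍ) := by
  have hAu : 𝒮.smul (A u) ((2 * q.re : ℝ) : ℍ) =
      𝒮.smul (A u) (q.re : ℍ) + 𝒮.smul (A u) (q.re : ℍ) := by
    rw [← 𝒮.smul_add', ← Quaternion.coe_add, two_mul]
  have hu' : 𝒮.smul u ((‖q‖ ^ 2 : ℝ) : ℍ) =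
      𝒮.smul u ((q.re * q.re : ℝ) : ℍ) + 𝒮.smul u ((‖q‖ ^ 2 - q.re ^ 2 : ℝ) : ℍ) := by
    rw [← 𝒮.smul_add', ← Quaternion.coe_add]
    ring_nf
  rw [Delta, shift, shift, hlin.map_sub hD hu.2 (hD.2.2 u hu.1 _), hlin.2 u hu.1,
    𝒮.sub_smul, 𝒮.smul_smul_real, hAu, hu']
  abel

lemma re_inn_Delta (hD : 𝒮.IsSubspace D) (hlin : 𝒮.RightLinearOn A D)
    (hA : 𝒮.IsSelfAdjointOn A D) (q : ℍ) {u : H} (hu : u ∈ D2 A D) :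
    (𝒮.inn u (𝒮.Delta A q u)).re =
      ‖𝒮.shift A q.re u‖ ^ 2 + (‖q‖ ^ 2 - q.re ^ 2) * ‖u‖ ^ 2 := by
  rw [Delta_eq hD hlin q hu, 𝒮.inn_add_right, Quaternion.re_add,
    ← (hA.shift q.re).symm u hu.1 _ (shift_mem hD hu q.re), ← 𝒮.norm_sq',
    𝒮.re_inn_smul_real_right, ← 𝒮.norm_sq']

lemma neg_mul_norm_le_norm_shift (hpos : 𝒮.PositiveOn A D) (a : ℝ) {u : H}
    (hu : u ∈ D) : -a * ‖u‖ ≤ ‖𝒮.shift A a u‖ := by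
  refine 𝒮.mul_norm_le_of_le_re_inn ?_
  rw [shift, 𝒮.inn_sub_right, Quaternion.re_sub, 𝒮.re_inn_smul_real_right, ← 𝒮.norm_sq']
  linarith [(hpos u hu).2]

lemma exists_coercive_Delta (hD : 𝒮.IsSubspace D) (hlin : 𝒮.RightLinearOn A D)
    (hA : 𝒮.IsSelfAdjointOn A D) (hpos : 𝒮.PositiveOn A D) {q : ℍ}
    (hq : ∀ r : ℝ, 0 ≤ r → q ≠ r) :
    ∃ δ > 0, ∀ u ∈ D2 A D, δ * ‖u‖ ^ 2 ≤ (𝒮.inn u (𝒮.Delta A q u)).re := by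
  rcases lt_or_ge q.re 0 with hre | hre
  · refine ⟨q.re ^ 2, by nlinarith, fun u hu => ?_⟩
    have hshift := pow_le_pow_left₀ (by nlinarith [norm_nonneg u])
      (neg_mul_norm_le_norm_shift hpos q.re hu.1) 2
    have hb : 0 ≤ ‖q‖ ^ 2 - q.re ^ 2 := by rw [Quaternion.sq_norm_sub_sq_re]; positivity
    rw [re_inn_Delta hD hlin hA q hu]
    nlinarith [mul_nonneg hb (sq_nonneg ‖u‖)]
  · have him : q.im ≠ 0 := fun h =>
      hq q.re hre (by simpa [h] using (Quaternion.re_add_im q).symm)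
    refine ⟨‖q‖ ^ 2 - q.re ^ 2, by rw [Quaternion.sq_norm_sub_sq_re]; positivity, fun u hu => ?_⟩
    rw [re_inn_Delta hD hlin hA q hu]
    nlinarith [sq_nonneg ‖𝒮.shift A q.re u‖]

lemma exists_Delta_add_smul_eq [CompleteSpace H] (hD : 𝒮.IsSubspace D)
    (hlin : 𝒮.RightLinearOn A D) (hA : 𝒮.IsSelfAdjointOn A D) (q : ℍ) {ε : ℝ} (hε : 0 < ε)
    (z : H) : ∃ v ∈ D2 A D, 𝒮.Delta A q v + 𝒮.smul v (ε : ℍ) = z := by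
  have hc : 0 < ‖q‖ ^ 2 - q.re ^ 2 + ε := by rw [Quaternion.sq_norm_sub_sq_re]; positivity
  obtain ⟨v, hv, hsv, hsum⟩ :=
    (hA.shift q.re).exists_map_map_add_smul_eq hD (hlin.shift q.re) hc z
  have hAv : A v ∈ D := by
    simpa only [shift, sub_add_cancel] using hD.2.1 _ hsv _ (hD.2.2 v hv (q.re : ℍ))
  refine ⟨v, ⟨hv, hAv⟩, ?_⟩
  rw [Delta_eq hD hlin q ⟨hv, hAv⟩, add_assoc, ← 𝒮.smul_add', ← Quaternion.coe_add, hsum]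

end

end QHS

end

/-- Every positive self-adjoint densely defined operator on a
quaternionic Hilbert space has spherical spectrum contained in `[0, +∞)`. -/
theorem positive_selfadjoint_spherical_spectrum_nonneg
    {H : Type} [NormedAddCommGroup H] [CompleteSpace H] (𝒮 : QHS H)
    (A : H → H) (D : Set H)
    (hD : 𝒮.IsSubspace D) (hdense : Dense D) (hlin : 𝒮.RightLinearOn A D)
    (hsa : 𝒮.SelfAdjointUnb A D) (hpos : 𝒮.PositiveOn A D) :
    ∀ q ∈ 𝒮.sphSpectrum A D, ∃ r : ℝ, 0 ≤ r ∧ q = ((r : ℝ) : ℍ) := by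
  intro q hq
  by_contra hq_nonneg
  push Not at hq_nonneg
  have hA := hsa.isSelfAdjointOn hdense
  obtain ⟨δ, hδ, hcoer⟩ := QHS.exists_coercive_Delta hD hlin hA hpos hq_nonneg
  have hbound : ∀ u ∈ D2 A D, ‖u‖ ≤ δ⁻¹ * ‖𝒮.Delta A q u‖ := fun u hu =>
    (le_inv_mul_iff₀ hδ).mpr (𝒮.mul_norm_le_of_le_re_inn (hcoer u hu))
  refine hq ⟨fun u hu h0 => ?_, ?_, δ⁻¹, hbound⟩
  · simpa [h0] using hbound u hu
  · exact 𝒮.dense_image_of_coercive hδ hcoer fun ε hε =>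
      QHS.exists_Delta_add_smul_eq hD hlin hA q hε
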